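/- The four functions H̃_C, Ĩ_1 = p_{θ_2} + (r²C/2)cos²θ_1, Ĩ_2 = p_{θ_3} + (r²C/2)sin²θ_1, Ĩ_3 = p_{θ_1}² + p_{θ_2}²/cos²θ_1 + p_{θ_3}²/sin²θ_1 − (p_{θ_2}+p_{θ_3})² are pairwise in involution ({Ĩ_i, Ĩ_j} = 0 for all i,j) with respect to the twisted Poisson structure of the n = 2 reduced LR Heisenberg system. -/

import Mathlib

open Real

/-- Phase space of the `n = 2` reduced LR system in hyperspherical coordinates:
`z = (r, θ₁, θ₂, θ₃, p_r, p_{θ₁}, p_{θ₂}, p_{θ₃})` indexed `0,…,7`. -/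
abbrev Ph := Fin 8 → ℝ

/-- Partial derivative `∂ᵢf`. -/
noncomputable def pd (i : Fin 8) (f : Ph → ℝ) (z : Ph) : ℝ :=
  fderiv ℝ f z (Pi.single i 1)

/-- The twisted Poisson bracket determined by `{r,p_r}=1`, `{θⱼ,p_{θₖ}}=δⱼₖ`,
`{p_r,p_{θ₂}} = rC cos²θ₁`, `{p_r,p_{θ₃}} = rC sin²θ₁`,
`{p_{θ₁},p_{θ₂}} = −r²C sinθ₁cosθ₁`, `{p_{θ₁},p_{θ₃}} = r²C sinθ₁cosθ₁`,
`{p_{θ₂},p_{θ₃}} = 0`, all other coordinate brackets zero, extended by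
bilinearity and the Leibniz rule. -/
noncomputable def PB (C : ℝ) (f g : Ph → ℝ) (z : Ph) : ℝ :=
  (pd 0 f z * pd 4 g z - pd 4 f z * pd 0 g z)
  + (pd 1 f z * pd 5 g z - pd 5 f z * pd 1 g z)
  + (pd 2 f z * pd 6 g z - pd 6 f z * pd 2 g z)
  + (pd 3 f z * pd 7 g z - pd 7 f z * pd 3 g z)
  + (z 0 * C * cos (z 1) ^ 2) * (pd 4 f z * pd 6 g z - pd 6 f z * pd 4 g z)
  + (z 0 * C * sin (z 1) ^ 2) * (pd 4 f z * pd 7 g z - pd 7 f z * pd 4 g z)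
  + (-(z 0) ^ 2 * C * sin (z 1) * cos (z 1))
      * (pd 5 f z * pd 6 g z - pd 6 f z * pd 5 g z)
  + ((z 0) ^ 2 * C * sin (z 1) * cos (z 1))
      * (pd 5 f z * pd 7 g z - pd 7 f z * pd 5 g z)

/-- The reduced Hamiltonian
`H̃_C = (1/2)[p_r² + p_{θ₁}²/r² + (1/r²)(p_{θ₂}²/cos²θ₁ + p_{θ₃}²/sin²θ₁)
− (p_{θ₂}+p_{θ₃})²/(1+r²)]`. -/
noncomputable def HamR (z : Ph) : ℝ :=
  (1 / 2) * ((z 4) ^ 2 + (z 5) ^ 2 / (z 0) ^ 2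
    + (1 / (z 0) ^ 2) * ((z 6) ^ 2 / cos (z 1) ^ 2 + (z 7) ^ 2 / sin (z 1) ^ 2)
    - (z 6 + z 7) ^ 2 / (1 + (z 0) ^ 2))

/-- `Ĩ₁ = p_{θ₂} + (r²C/2) cos²θ₁`. -/
noncomputable def It1 (C : ℝ) (z : Ph) : ℝ := z 6 + (z 0) ^ 2 * C / 2 * cos (z 1) ^ 2

/-- `Ĩ₂ = p_{θ₃} + (r²C/2) sin²θ₁`. -/
noncomputable def It2 (C : ℝ) (z : Ph) : ℝ := z 7 + (z 0) ^ 2 * C / 2 * sin (z 1) ^ 2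

/-- `Ĩ₃ = p_{θ₁}² + p_{θ₂}²/cos²θ₁ + p_{θ₃}²/sin²θ₁ − (p_{θ₂}+p_{θ₃})²`. -/
noncomputable def It3 (z : Ph) : ℝ :=
  (z 5) ^ 2 + (z 6) ^ 2 / cos (z 1) ^ 2 + (z 7) ^ 2 / sin (z 1) ^ 2 - (z 6 + z 7) ^ 2

/-!
In the twisted structure the magnetic terms exactly cancel the `r`- and `θ₁`-dependence of the
potentials in `Ĩ₁, Ĩ₂`, so `{Ĩ₁, f} = -∂_{θ₂} f` and `{Ĩ₂, f} = -∂_{θ₃} f`. None of the four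
functions depends on `θ₂` or `θ₃`, which settles every bracket involving `Ĩ₁` or `Ĩ₂`.

For the remaining one, `H̃_C = p_r²/2 + Ĩ₃/(2r²) + (p_{θ₂}+p_{θ₃})²/(2r²(1+r²))`, so `{H̃_C, Ĩ₃}`
is a combination of `{p_r, Ĩ₃}`, `{r, Ĩ₃}`, `{p_{θ₂}+p_{θ₃}, Ĩ₃}` and `{Ĩ₃, Ĩ₃}`. Each vanishes
because `Ĩ₃` is constant along the corresponding Hamiltonian direction; for `p_r` this is the
invariance of `Ĩ₃ = p_{θ₁}² + (p_{θ₂} tan θ₁ − p_{θ₃} cot θ₁)²` under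
`(p_{θ₂}, p_{θ₃}) ↦ (p_{θ₂} + t cos²θ₁, p_{θ₃} + t sin²θ₁)`.
-/

open Filter Topology

theorem fderiv_apply_eq_zero_of_forall_add_smul {𝕜 E F : Type*} [NontriviallyNormedField 𝕜]
    [NormedAddCommGroup E] [NormedSpace 𝕜 E] [NormedAddCommGroup F] [NormedSpace 𝕜 F]
    {f : E → F} {z v : E} (h : ∀ t : 𝕜, f (z + t • v) = f z) : fderiv 𝕜 f z v = 0 := by
  by_cases hf : DifferentiableAt 𝕜 f z
  · rw [← hf.lineDeriv_eq_fderiv, lineDeriv, funext h, deriv_const]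
  · rw [fderiv_zero_of_not_differentiableAt hf, zero_apply]

theorem pd_eq_zero_of_forall_add_single {f : Ph → ℝ} {z : Ph} {i : Fin 8}
    (h : ∀ t : ℝ, f (z + t • Pi.single i 1) = f z) : pd i f z = 0 :=
  fderiv_apply_eq_zero_of_forall_add_smul h

noncomputable abbrev coord (i : Fin 8) : Ph →L[ℝ] ℝ := ContinuousLinearMap.proj i

section Bracket

variable (C : ℝ) (z : Ph)

theorem PB_swap (f g : Ph → ℝ) : PB C f g z = -PB C g f z := by
  unfold PB
  ring

theorem PB_It1_left (f : Ph → ℝ) : PB C (It1 C) f z = -pd 2 f z := by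
  have h : HasFDerivAt (It1 C) _ z :=
    (coord 6).hasFDerivAt.add ((((coord 0).hasFDerivAt.pow 2).mul_const C |>.mul_const 2⁻¹).mul
      ((coord 1).hasFDerivAt.cos.pow 2))
  simp only [PB, pd, h.fderiv, add_apply, smul_apply, smul_eq_mul, nsmul_eq_mul,
    ContinuousLinearMap.proj_apply, Pi.single_apply, Fin.reduceEq, ↓reduceIte]
  ring

theorem PB_It2_left (f : Ph → ℝ) : PB C (It2 C) f z = -pd 3 f z := by
  have h : HasFDerivAt (It2 C) _ z :=
    (coord 7).hasFDerivAt.add ((((coord 0).hasFDerivAt.pow 2).mul_const C |>.mul_const 2⁻¹).mul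
      ((coord 1).hasFDerivAt.sin.pow 2))
  simp only [PB, pd, h.fderiv, add_apply, smul_apply, smul_eq_mul, nsmul_eq_mul,
    ContinuousLinearMap.proj_apply, Pi.single_apply, Fin.reduceEq, ↓reduceIte]
  ring

end Bracket

theorem HamR_eq_of_ne_zero (w : Ph) (hr : w 0 ≠ 0) :
    HamR w = w 4 ^ 2 / 2 + It3 w * (1 / (2 * w 0 ^ 2))
      + (w 6 + w 7) ^ 2 * (1 / (2 * w 0 ^ 2 * (1 + w 0 ^ 2))) := by
  unfold HamR It3
  field_simp
  ring

theorem differentiableAt_It3 (z : Ph) (hs : sin (z 1) ≠ 0) (hc : cos (z 1) ≠ 0) :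
    DifferentiableAt ℝ It3 z := by
  unfold It3
  fun_prop (disch := positivity)

theorem cos_sq_mul_pd_It3_add_sin_sq_mul_pd_It3 (z : Ph) (hs : sin (z 1) ≠ 0)
    (hc : cos (z 1) ≠ 0) :
    cos (z 1) ^ 2 * pd 6 It3 z + sin (z 1) ^ 2 * pd 7 It3 z = 0 := by
  have h := fderiv_apply_eq_zero_of_forall_add_smul (f := It3) (z := z)
    (v := cos (z 1) ^ 2 • Pi.single 6 1 + sin (z 1) ^ 2 • Pi.single 7 1) fun t : ℝ => by
      simp only [It3, smul_add, Pi.add_apply, Pi.smul_apply, smul_eq_mul, Pi.single_apply,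
        Fin.reduceEq, ↓reduceIte, mul_zero, add_zero, mul_one, zero_add]
      field_simp
      linear_combination -(cos (z 1) ^ 2 * sin (z 1) ^ 2 * t
        * (2 * (z 6 + z 7) + t * (sin (z 1) ^ 2 + cos (z 1) ^ 2))) * sin_sq_add_cos_sq (z 1)
  simpa [pd] using h

theorem exists_fderiv_HamR (z : Ph) (hr : z 0 ≠ 0) (hs : sin (z 1) ≠ 0) (hc : cos (z 1) ≠ 0) :
    ∃ a b c : ℝ, fderiv ℝ HamR z =
      z 4 • coord 4 + a • fderiv ℝ It3 z + b • coord 0 + c • (coord 6 + coord 7) := by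
  set u : ℝ → ℝ := fun r => 1 / (2 * r ^ 2)
  set k : ℝ → ℝ := fun r => 1 / (2 * r ^ 2 * (1 + r ^ 2))
  have hloc : HamR =ᶠ[𝓝 z]
      fun w => w 4 ^ 2 / 2 + It3 w * u (w 0) + (w 6 + w 7) ^ 2 * k (w 0) := by
    filter_upwards [(continuous_apply 0).isOpen_preimage _ isOpen_ne |>.mem_nhds hr] with w hw
    exact HamR_eq_of_ne_zero w hw
  have hu : HasDerivAt u (deriv u (z 0)) (z 0) := by
    apply DifferentiableAt.hasDerivAt
    fun_prop (disch := positivity)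
  have hk : HasDerivAt k (deriv k (z 0)) (z 0) := by
    apply DifferentiableAt.hasDerivAt
    fun_prop (disch := positivity)
  have hG := ((((coord 4).hasFDerivAt.pow 2).mul_const 2⁻¹).add
    ((differentiableAt_It3 z hs hc).hasFDerivAt.mul
      (hu.comp_hasFDerivAt z (coord 0).hasFDerivAt))).add
    ((((coord 6).hasFDerivAt.add (coord 7).hasFDerivAt).pow 2).mul
      (hk.comp_hasFDerivAt z (coord 0).hasFDerivAt))
  refine ⟨u (z 0), It3 z * deriv u (z 0) + (z 6 + z 7) ^ 2 * deriv k (z 0),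
    2 * (z 6 + z 7) * k (z 0), ?_⟩
  rw [(hG.congr_of_eventuallyEq hloc).fderiv]
  ext v
  simp only [Function.comp_apply, Pi.add_apply, add_apply, smul_apply, smul_eq_mul,
    nsmul_eq_mul, ContinuousLinearMap.proj_apply]
  ring

theorem PB_HamR_It3 (C : ℝ) (z : Ph) (hr : z 0 ≠ 0) (hs : sin (z 1) ≠ 0)
    (hc : cos (z 1) ≠ 0) :
    PB C HamR It3 z = 0 := by
  obtain ⟨a, b, c, hH⟩ := exists_fderiv_HamR z hr hs hc
  have hpdH : ∀ i, pd i HamR z = z 4 * coord 4 (Pi.single i 1) + a * pd i It3 z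
      + b * coord 0 (Pi.single i 1) + c * (coord 6 (Pi.single i 1) + coord 7 (Pi.single i 1)) := by
    intro i
    simp [pd, hH, mul_add]
  have h0 : pd 0 It3 z = 0 := pd_eq_zero_of_forall_add_single fun t => by simp [It3]
  have h2 : pd 2 It3 z = 0 := pd_eq_zero_of_forall_add_single fun t => by simp [It3]
  have h3 : pd 3 It3 z = 0 := pd_eq_zero_of_forall_add_single fun t => by simp [It3]
  have h4 : pd 4 It3 z = 0 := pd_eq_zero_of_forall_add_single fun t => by simp [It3]
  have hflow := cos_sq_mul_pd_It3_add_sin_sq_mul_pd_It3 z hs hc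
  simp only [PB, hpdH, ContinuousLinearMap.proj_apply, Pi.single_apply, Fin.reduceEq, ↓reduceIte]
  -- the summands are `{p_r, Ĩ₃}`, `{r, Ĩ₃}`, `{p_{θ₂}+p_{θ₃}, Ĩ₃}`; the `a`-terms cancel
  linear_combination z 4 * (z 0 * C * hflow - h0) + b * h4
    - c * (h2 + h3 + z 0 * C * (cos (z 1) ^ 2 + sin (z 1) ^ 2) * h4)

/-- the four functions `H̃_C, Ĩ₁, Ĩ₂, Ĩ₃` are pairwise in
involution with respect to the twisted Poisson structure. -/
theorem LR_hyperspherical_involution (C : ℝ) (z : Ph)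
    (hr : 0 < z 0) (hθ : sin (z 1) * cos (z 1) ≠ 0) :
    PB C HamR (It1 C) z = 0 ∧ PB C HamR (It2 C) z = 0 ∧ PB C HamR It3 z = 0 ∧
    PB C (It1 C) (It2 C) z = 0 ∧ PB C (It1 C) It3 z = 0 ∧
    PB C (It2 C) It3 z = 0 := by
  obtain ⟨hs, hc⟩ := mul_ne_zero_iff.mp hθ
  have hH2 : pd 2 HamR z = 0 := pd_eq_zero_of_forall_add_single fun t => by simp [HamR]
  have hH3 : pd 3 HamR z = 0 := pd_eq_zero_of_forall_add_single fun t => by simp [HamR]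
  have hI2 : pd 2 (It2 C) z = 0 := pd_eq_zero_of_forall_add_single fun t => by simp [It2]
  have hI3₂ : pd 2 It3 z = 0 := pd_eq_zero_of_forall_add_single fun t => by simp [It3]
  have hI3₃ : pd 3 It3 z = 0 := pd_eq_zero_of_forall_add_single fun t => by simp [It3]
  refine ⟨?_, ?_, PB_HamR_It3 C z hr.ne' hs hc, ?_, ?_, ?_⟩
  · rw [PB_swap, PB_It1_left, hH2, neg_zero, neg_zero]
  · rw [PB_swap, PB_It2_left, hH3, neg_zero, neg_zero]
  · rw [PB_It1_left, hI2, neg_zero]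
  · rw [PB_It1_left, hI3₂, neg_zero]
  · rw [PB_It2_left, hI3₃, neg_zero]
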